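/- Let A be a finite set with |A| = a, let B ⊆ A with |B| = b, and let integers c, d satisfy 0 ≤ c, b + c ≤ a. Let S be a uniformly random subset of A of size c, and let Y be a binomial random variable with parameters c and b/(a−c). Then Pr[ |S ∩ B| ≥ d ] ≤ Pr[ Y ≥ d ]. -/

import Mathlib

/-!
For a monotone test function `g`, compare `𝔼[g(#(S ∩ B))]` with `𝔼[g Y]` by induction on `c`.
Singling out one element of `S` splits the hypergeometric law for `c + 1` draws into a mixture:
with weight `b / a` a marked element was drawn and `g` is shifted by one, otherwise `b` is
unchanged. Both components are dominated by the binomial laws for `c` draws, and since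
`b / a ≤ p` while the shifted binomial expectation is the larger one, the mixture is dominated by
`p 𝔼[g (Y + 1)] + (1 - p) 𝔼[g Y]`, the binomial expectation for `c + 1` draws. The hypothesis
`b ≤ p (a - c)` is exactly what survives the passage from `c + 1` to `c`. The theorem is the case
where `g` is the indicator of `[d, ∞)`.
-/

open Finset

theorem card_filter_powersetCard_card_inter {α : Type*} [DecidableEq α] {A B : Finset α}
    (hBA : B ⊆ A) {c i : ℕ} (hic : i ≤ c) :
    #{S ∈ A.powersetCard c | #(S ∩ B) = i} = (#B).choose i * (#(A \ B)).choose (c - i) := by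
  have split {T U : Finset α} (hTB : T ⊆ B) (hUAB : U ⊆ A \ B) :
      (T ∪ U) ∩ B = T ∧ (T ∪ U) \ B = U := by
    constructor <;> ext x <;> grind
  rw [← card_powersetCard, ← card_powersetCard, ← card_product]
  refine card_nbij' (fun S => (S ∩ B, S \ B)) (fun P => P.1 ∪ P.2) ?_ ?_ ?_ ?_
  · intro S hS
    simp only [mem_coe, mem_filter, mem_product, mem_powersetCard] at hS ⊢
    have := card_inter_add_card_sdiff S B
    exact ⟨⟨inter_subset_right, hS.2⟩, sdiff_subset_sdiff hS.1.1 le_rfl, by omega⟩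
  · rintro ⟨T, U⟩ hTU
    simp only [mem_coe, mem_product, mem_powersetCard] at hTU
    obtain ⟨⟨hTB, hT⟩, hUAB, hU⟩ := hTU
    simp only [mem_coe, mem_filter, mem_powersetCard, (split hTB hUAB).1]
    refine ⟨⟨union_subset (hTB.trans hBA) (hUAB.trans sdiff_subset), ?_⟩, hT⟩
    rw [card_union_of_disjoint (disjoint_of_subset_left hTB (disjoint_of_subset_right hUAB
      disjoint_sdiff))]
    omega
  · intro S _
    exact sup_inf_sdiff S B
  · rintro ⟨T, U⟩ hTU
    simp only [mem_coe, mem_product, mem_powersetCard] at hTU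
    exact Prod.ext (split hTU.1.1 hTU.2.1).1 (split hTU.1.1 hTU.2.1).2

theorem Nat.add_one_mul_choose_add_one (m k : ℕ) :
    (k + 1) * m.choose (k + 1) = m * (m - 1).choose k := by
  cases m with
  | zero => simp
  | succ m => rw [Nat.add_sub_cancel, Nat.add_one_mul_choose_eq, mul_comm]

/-- `(m + n).choose c` times `𝔼[g H]` for `H ~ HG(m + n, m, c)`. -/
noncomputable def hypergeomSum (m n c : ℕ) (g : ℕ → ℝ) : ℝ :=
  ∑ ij ∈ antidiagonal c, (m.choose ij.1 * n.choose ij.2 : ℝ) * g ij.1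

noncomputable def binomialSum (c : ℕ) (p : ℝ) (g : ℕ → ℝ) : ℝ :=
  ∑ ij ∈ antidiagonal c, (c.choose ij.1 : ℝ) * p ^ ij.1 * (1 - p) ^ ij.2 * g ij.1

theorem sum_powersetCard_eq_hypergeomSum {α : Type*} [DecidableEq α] {A B : Finset α}
    (hBA : B ⊆ A) (c : ℕ) (g : ℕ → ℝ) :
    ∑ S ∈ A.powersetCard c, g #(S ∩ B) = hypergeomSum #B #(A \ B) c g := by
  have hmaps : ∀ S ∈ A.powersetCard c, #(S ∩ B) ∈ range (c + 1) := fun S hS =>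
    mem_range_succ_iff.mpr ((card_le_card inter_subset_left).trans (mem_powersetCard.mp hS).2.le)
  rw [← sum_fiberwise_of_maps_to hmaps, hypergeomSum, Nat.sum_antidiagonal_eq_sum_range_succ_mk]
  refine sum_congr rfl fun i hi => ?_
  rw [sum_congr rfl fun S hS => congrArg g (mem_filter.mp hS).2, sum_const, nsmul_eq_mul,
    card_filter_powersetCard_card_inter hBA (mem_range_succ_iff.mp hi)]
  push_cast
  rfl

/-- Double counting of the pairs `(S, x)` with `x ∈ S`, split by whether `x` is marked. -/
theorem succ_mul_hypergeomSum_succ (m n c : ℕ) (g : ℕ → ℝ) :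
    (c + 1) * hypergeomSum m n (c + 1) g =
      m * hypergeomSum (m - 1) n c (fun i => g (i + 1)) + n * hypergeomSum m (n - 1) c g := by
  have hsplit : (c + 1) * hypergeomSum m n (c + 1) g =
      (∑ ij ∈ antidiagonal (c + 1), (ij.1 * m.choose ij.1 * n.choose ij.2 : ℝ) * g ij.1) +
        ∑ ij ∈ antidiagonal (c + 1), (m.choose ij.1 * (ij.2 * n.choose ij.2) : ℝ) * g ij.1 := by
    rw [hypergeomSum, mul_sum, ← sum_add_distrib]
    refine sum_congr rfl fun ij hij => ?_
    rw [HasAntidiagonal.mem_antidiagonal] at hij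
    rw [← Nat.cast_one, ← Nat.cast_add, ← hij]
    push_cast
    ring
  rw [hsplit, Nat.sum_antidiagonal_succ, Nat.sum_antidiagonal_succ', hypergeomSum, hypergeomSum,
    mul_sum, mul_sum]
  simp only [Nat.cast_zero, zero_mul, mul_zero, zero_add]
  congr 1 <;> refine sum_congr rfl fun ij _ => ?_
  · have h : ((ij.1 : ℝ) + 1) * m.choose (ij.1 + 1) = m * (m - 1).choose ij.1 := by
      exact_mod_cast Nat.add_one_mul_choose_add_one m ij.1
    push_cast
    linear_combination (n.choose ij.2 * g (ij.1 + 1)) * h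
  · have h : ((ij.2 : ℝ) + 1) * n.choose (ij.2 + 1) = n * (n - 1).choose ij.2 := by
      exact_mod_cast Nat.add_one_mul_choose_add_one n ij.2
    push_cast
    linear_combination (m.choose ij.1 * g ij.1) * h

theorem binomialSum_succ (c : ℕ) (p : ℝ) (g : ℕ → ℝ) :
    binomialSum (c + 1) p g =
      p * binomialSum c p (fun i => g (i + 1)) + (1 - p) * binomialSum c p g := by
  simp only [binomialSum, mul_assoc]
  rw [sum_antidiagonal_choose_succ_mul (fun i j => p ^ i * ((1 - p) ^ j * g i)), add_comm,
    mul_sum, mul_sum]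
  congr 1 <;> refine sum_congr rfl fun ij hij => ?_
  · rw [Nat.choose_symm_of_eq_add (HasAntidiagonal.mem_antidiagonal.mp hij).symm]
    ring
  · ring

theorem binomialSum_mono {c : ℕ} {p : ℝ} (hp0 : 0 ≤ p) (hp1 : p ≤ 1) {g g' : ℕ → ℝ}
    (hgg' : ∀ i, g i ≤ g' i) : binomialSum c p g ≤ binomialSum c p g' := by
  unfold binomialSum
  gcongr
  exact hgg' _

theorem hypergeomSum_le_choose_mul_binomialSum {p : ℝ} (hp0 : 0 ≤ p) (hp1 : p ≤ 1)
    {g : ℕ → ℝ} (hg : Monotone g) {m n c : ℕ} (hmp : (m : ℝ) ≤ p * (m + n - c)) :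
    hypergeomSum m n c g ≤ (m + n).choose c * binomialSum c p g := by
  induction c generalizing m n g with
  | zero => simp [hypergeomSum, binomialSum]
  | succ c ih =>
    have hg' : Monotone fun i => g (i + 1) := fun i j hij => hg (by omega)
    have hB : binomialSum c p g ≤ binomialSum c p (fun i => g (i + 1)) :=
      binomialSum_mono hp0 hp1 fun i => hg i.le_succ
    have hm : (m : ℝ) * hypergeomSum (m - 1) n c (fun i => g (i + 1)) ≤
        m * ((m + n - 1).choose c * binomialSum c p (fun i => g (i + 1))) := by
      rcases m with _ | k
      · simp
      · refine mul_le_mul_of_nonneg_left ?_ (Nat.cast_nonneg _)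
        rw [show k + 1 + n - 1 = k + n by omega, Nat.add_sub_cancel]
        exact ih hg' (by push_cast at hmp; linarith)
    have hn : (n : ℝ) * hypergeomSum m (n - 1) c g ≤
        n * ((m + n - 1).choose c * binomialSum c p g) := by
      rcases n with _ | l
      · simp
      · refine mul_le_mul_of_nonneg_left ?_ (Nat.cast_nonneg _)
        rw [show m + (l + 1) - 1 = m + l by omega, Nat.add_sub_cancel]
        exact ih hg (by push_cast at hmp; linarith)
    have hchoose : ((c : ℝ) + 1) * (m + n).choose (c + 1) = (m + n) * (m + n - 1).choose c := by
      exact_mod_cast Nat.add_one_mul_choose_add_one (m + n) c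
    have hmass : (m : ℝ) ≤ p * (m + n) := by push_cast at hmp; nlinarith
    rw [← mul_le_mul_iff_of_pos_left (by positivity : (0 : ℝ) < c + 1),
      succ_mul_hypergeomSum_succ, binomialSum_succ, ← mul_assoc, hchoose]
    have hC : (0 : ℝ) ≤ (m + n - 1).choose c := Nat.cast_nonneg _
    -- The surplus weight `p (m + n) - m` sits on the larger of the two binomial expectations.
    linarith [mul_nonneg (mul_nonneg (sub_nonneg.mpr hmass) (sub_nonneg.mpr hB)) hC]

/-- **Hypergeometric–binomial tail domination.**
Let `B ⊆ A` with `|A| = a`, `|B| = b`, and let integers `c, d` satisfy `0 ≤ c` and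
`b + c ≤ a`.  If `S` is a uniformly random subset of `A` of size `c` and `Y` is binomial
with parameters `c` and `b/(a−c)`, then `Pr[|S ∩ B| ≥ d] ≤ Pr[Y ≥ d]`. -/
theorem hypergeometric_le_binomial {α : Type*} [DecidableEq α]
    (A B : Finset α) (hBA : B ⊆ A) (a b c : ℕ) (d : ℤ)
    (ha : A.card = a) (hb : B.card = b) (hbc : b + c ≤ a) :
    (((A.powersetCard c).filter fun S => d ≤ ((S ∩ B).card : ℤ)).card : ℝ) /
        (a.choose c : ℝ) ≤
      ∑ j ∈ Finset.range (c + 1),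
        if d ≤ (j : ℤ) then
          (c.choose j : ℝ) * ((b : ℝ) / ((a : ℝ) - c)) ^ j *
            (1 - (b : ℝ) / ((a : ℝ) - c)) ^ (c - j)
        else 0 := by
  subst ha hb
  have hAB : #B + #(A \ B) = #A := by rw [add_comm, card_sdiff_add_card_eq_card hBA]
  set p : ℝ := #B / (#A - c) with hp
  have hba : (#B : ℝ) ≤ #A - c := by
    rw [le_sub_iff_add_le]
    exact_mod_cast hbc
  have hp0 : 0 ≤ p := div_nonneg (Nat.cast_nonneg _) ((Nat.cast_nonneg _).trans hba)
  have hp1 : p ≤ 1 := div_le_one_of_le₀ hba ((Nat.cast_nonneg _).trans hba)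
  have hbp : (#B : ℝ) ≤ p * (#B + #(A \ B) - c) := by
    rw [← Nat.cast_add, hAB, hp, div_mul_cancel_of_imp]
    intro hac
    linarith [(#B).cast_nonneg (α := ℝ)]
  have htail : Monotone fun j : ℕ => if d ≤ (j : ℤ) then (1 : ℝ) else 0 := by
    intro i j hij
    dsimp only
    split_ifs <;> first | omega | norm_num
  have key := hypergeomSum_le_choose_mul_binomialSum hp0 hp1 htail hbp
  rw [← sum_powersetCard_eq_hypergeomSum hBA, hAB, binomialSum,
    Nat.sum_antidiagonal_eq_sum_range_succ_mk] at key
  simp only [mul_ite, mul_one, mul_zero] at key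
  rwa [natCast_card_filter, div_le_iff₀ (by exact_mod_cast Nat.choose_pos (by omega)), mul_comm]
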